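/- arXiv:1205.5314 — 2 statements merged into one kernel-verified Lean document; each statement's English description precedes it below -/
import Mathlib

section
/- Let V be a Hilbert space continuously embedded in C_0^2(Ω,ℝ^d), Ω a bounded open subset of ℝ^d, e^H a bounded continuous density on Ω, and λ > 0. If v̂ ∈ V^{[0,1]} maximizes the penalized log-likelihood E_λ over V^{[0,1]}, then v̂ is a geodesic (minimum-energy) flow: for every w ∈ V^{[0,1]} with φ^w_1 = φ^{v̂}_1 one has ∫₀¹ ‖v̂_t‖²_V dt ≤ ∫₀¹ ‖w_t‖²_V dt. -/
open MeasureTheory Set Filter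
open scoped RealInnerProductSpace BigOperators Topology

noncomputable section

abbrev Euc (d : ℕ) := EuclideanSpace ℝ (Fin d)

/-- The `C^k` sup-norm `‖f‖_{k,∞} = Σ_{j≤k} sup_{|β|=j} sup_Ω |D^β f|` over `Ω`,
expressed via iterated Fréchet derivatives. -/
def CknormOn {d : ℕ} (k : ℕ) (Ω : Set (Euc d)) (f : Euc d → Euc d) : ℝ :=
  ∑ j ∈ Finset.range (k + 1), ⨆ x ∈ Ω, ‖iteratedFDeriv ℝ j f x‖

/-- Membership in `C_0^k(Ω, ℝ^d)`: `C^k` on `Ω`, with all derivatives of order `≤ k`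
extending continuously by `0` to the boundary of `Ω`. -/
def MemC0k {d : ℕ} (k : ℕ) (Ω : Set (Euc d)) (f : Euc d → Euc d) : Prop :=
  ContDiffOn ℝ k f Ω ∧
    ∀ j ≤ k, ∀ x ∈ frontier Ω,
      Tendsto (iteratedFDeriv ℝ j f) (𝓝[Ω] x) (𝓝 0)

/-- `v ∈ V^{[0,1]}`: a measurable map `[0,1] → V` with `∫₀¹ ‖v_t‖² dt < ∞`. -/
def InV01 {V : Type*} [NormedAddCommGroup V] [MeasurableSpace V] (v : ℝ → V) : Prop :=
  Measurable v ∧ IntegrableOn (fun t => ‖v t‖ ^ 2) (Icc (0:ℝ) 1)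

/-- The norm `‖v‖_{V^{[0,1]}} = (∫₀¹ ‖v_t‖² dt)^{1/2}`. -/
def normV01 {V : Type*} [NormedAddCommGroup V] (v : ℝ → V) : ℝ :=
  Real.sqrt (∫ t in (0:ℝ)..1, ‖v t‖ ^ 2)

/-- Divergence of a vector field: the trace of its Jacobian. -/
def divg {d : ℕ} (f : Euc d → Euc d) (x : Euc d) : ℝ :=
  LinearMap.trace ℝ (Euc d) (fderiv ℝ f x : Euc d →ₗ[ℝ] Euc d)

/-- The penalized log-likelihood
`E_λ(v) = (1/n) Σ_k [log det Dφ^v_1(X_k) + H(φ^v_1(X_k))] − (λ/2)∫₀¹‖v_t‖²dt`,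
where `Φ v s t` is the flow of `v` from time `s` to time `t` (so `φ^v_1 = Φ v 0 1`). -/
def Elam {d : ℕ} {V : Type*} [NormedAddCommGroup V] [InnerProductSpace ℝ V]
    (ι : V →ₗ[ℝ] (Euc d → Euc d)) (Φ : (ℝ → V) → ℝ → ℝ → Euc d → Euc d)
    (H : Euc d → ℝ) {n : ℕ} (X : Fin n → Euc d) (lam : ℝ) (v : ℝ → V) : ℝ :=
  (1 / (n : ℝ)) *
      ∑ k, (Real.log ((fderiv ℝ (Φ v 0 1) (X k)).det) + H (Φ v 0 1 (X k)))
    - (lam / 2) * ∫ t in (0:ℝ)..1, ‖v t‖ ^ 2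

/-- any maximizer of the penalized log-likelihood is a geodesic
(minimum-energy) flow: any `w ∈ V^{[0,1]}` with the same time-one map satisfies
`∫₀¹‖v̂_t‖² dt ≤ ∫₀¹‖w_t‖² dt`. -/
theorem stmt_4 {d : ℕ} (Ω : Set (Euc d)) (hΩo : IsOpen Ω) (hΩb : Bornology.IsBounded Ω)
    (V : Type*) [NormedAddCommGroup V] [InnerProductSpace ℝ V] [CompleteSpace V]
    [MeasurableSpace V] [BorelSpace V]
    (ι : V →ₗ[ℝ] (Euc d → Euc d)) (hinj : Function.Injective ι)
    (c : ℝ) (hc : 0 < c)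
    (hemb : ∀ f : V, MemC0k 2 Ω (ι f) ∧ CknormOn 2 Ω (ι f) ≤ c * ‖f‖)
    (H : Euc d → ℝ) (hHc : ContinuousOn (fun x => Real.exp (H x)) Ω)
    (hHb : BddAbove (H '' Ω)) (hHd : ∫ x in Ω, Real.exp (H x) = 1)
    (n : ℕ) (hn : 0 < n) (X : Fin n → Euc d) (hX : ∀ k, X k ∈ Ω)
    (lam : ℝ) (hlam : 0 < lam)
    (Φ : (ℝ → V) → ℝ → ℝ → Euc d → Euc d)
    (hflow : ∀ v : ℝ → V, InV01 v → ∀ s ∈ Icc (0:ℝ) 1, ∀ t ∈ Icc (0:ℝ) 1, ∀ x ∈ Ω,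
      Φ v s t x = x + ∫ u in s..t, ι (v u) (Φ v s u x))
    (vhat : ℝ → V) (hvhat : InV01 vhat)
    (hmax : ∀ v : ℝ → V, InV01 v → Elam ι Φ H X lam v ≤ Elam ι Φ H X lam vhat) :
    ∀ w : ℝ → V, InV01 w → (∀ x ∈ Ω, Φ w 0 1 x = Φ vhat 0 1 x) →
      (∫ t in (0:ℝ)..1, ‖vhat t‖ ^ 2) ≤ ∫ t in (0:ℝ)..1, ‖w t‖ ^ 2 := by
  intro w hw heq
  have hE := hmax w hw
  have hsum : ∀ k : Fin n,
      (Real.log ((fderiv ℝ (Φ w 0 1) (X k)).det) + H (Φ w 0 1 (X k)))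
        = (Real.log ((fderiv ℝ (Φ vhat 0 1) (X k)).det) + H (Φ vhat 0 1 (X k))) := by
    intro k
    have hnhds : Ω ∈ 𝓝 (X k) := hΩo.mem_nhds (hX k)
    have hev : Φ w 0 1 =ᶠ[𝓝 (X k)] Φ vhat 0 1 :=
      Filter.eventuallyEq_of_mem hnhds heq
    rw [hev.fderiv_eq, heq (X k) (hX k)]
  unfold Elam at hE
  rw [Finset.sum_congr rfl (fun k _ => hsum k)] at hE
  nlinarith [hE, hlam]
end
end

section
/- Let φ : U → ℝ^d be a C² map on an open set U ⊆ ℝ^d whose Jacobian matrix Dφ(x) is invertible with positive determinant for all x ∈ U, and let h : U → ℝ^d be a C¹ vector field. Then for every x ∈ U: trace( D[ Dφ(x) h(x) ] · (Dφ(x))^{-1} ) = h(x) · ∇ log det Dφ(x) + div h(x), where D[Dφ h] is the Jacobian matrix of the map x ↦ Dφ(x)h(x), ∇ log det Dφ is the gradient of x ↦ log det Dφ(x), and div h = trace(Dh). -/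
open MeasureTheory Set Filter
open scoped RealInnerProductSpace BigOperators Topology

noncomputable section

/-!
Differentiating `y ↦ Dφ(y) h(y)` gives `Dφ ∘ Dh + D²φ(·, h)`. Composed with `Dφ⁻¹`, the first
term is conjugate to `Dh`, so its trace is `div h`; by symmetry of `D²φ` and cyclicity of the trace,
the second contributes `tr (Dφ⁻¹ ∘ D²φ(h, ·))`. This is the derivative of `log det Dφ` in
direction `h` by Jacobi's formula `d(det)_A B = det A · tr (A⁻¹ B)`, which follows from
`det (A + B) = det A · det (1 + A⁻¹ B)` and `d/dt det (1 + t B) |_{t=0} = tr B`.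
-/

open Polynomial in
theorem Matrix.hasDerivAt_det_one_add_smul {𝕜 : Type*} [NontriviallyNormedField 𝕜]
    {n : Type*} [Fintype n] [DecidableEq n] (M : Matrix n n 𝕜) :
    HasDerivAt (fun t : 𝕜 => (1 + t • M).det) M.trace 0 := by
  have h := (det (1 + (X : 𝕜[X]) • M.map C)).hasDerivAt 0
  rw [derivative_det_one_add_X_smul] at h
  convert h using 2 with t
  simp [eval_det, ← smul_eq_mul_diagonal]

theorem Matrix.differentiable_det_of {𝕜 : Type*} [NontriviallyNormedField 𝕜]
    {n : Type*} [Fintype n] [DecidableEq n] :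
    Differentiable 𝕜 (fun M : n → n → 𝕜 => (of M).det) := by
  simp only [det_apply, of_apply, Units.smul_def]
  fun_prop

namespace ContinuousLinearMap

theorem det_mul {R M : Type*} [CommRing R] [TopologicalSpace M] [AddCommGroup M] [Module R M]
    (f g : M →L[R] M) : (f * g).det = f.det * g.det :=
  LinearMap.det_comp _ _

variable {𝕜 : Type*} [NontriviallyNormedField 𝕜]
  {E : Type*} [NormedAddCommGroup E] [NormedSpace 𝕜 E] [FiniteDimensional 𝕜 E]

theorem differentiable_det [CompleteSpace 𝕜] : Differentiable 𝕜 (det : (E →L[𝕜] E) → 𝕜) := by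
  let b := Module.finBasis 𝕜 E
  have hdet : (det : (E →L[𝕜] E) → 𝕜) =
      (fun M => (Matrix.of M).det) ∘ fun f i j => b.equivFunL (f (b j)) i := by
    funext f
    rw [det, ← LinearMap.det_toMatrix b]
    congr 1
    ext i j
    simp [LinearMap.toMatrix_apply]
  rw [hdet]
  exact Matrix.differentiable_det_of.comp (by fun_prop)

theorem hasDerivAt_det_one_add_smul (B : E →L[𝕜] E) :
    HasDerivAt (fun t : 𝕜 => (1 + t • B).det) (LinearMap.trace 𝕜 E B) 0 := by
  let b := Module.finBasis 𝕜 E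
  rw [LinearMap.trace_eq_matrix_trace 𝕜 b]
  convert (LinearMap.toMatrix b b B).hasDerivAt_det_one_add_smul using 2 with t
  rw [det, ← LinearMap.det_toMatrix b]
  simp [LinearMap.toMatrix_one]

theorem fderiv_det_one_apply [CompleteSpace 𝕜] (B : E →L[𝕜] E) :
    fderiv 𝕜 det (1 : E →L[𝕜] E) B = LinearMap.trace 𝕜 E B := by
  have h := (differentiable_det 1).hasFDerivAt.comp_hasDerivAt_of_eq (0 : 𝕜)
    (((hasDerivAt_id (0 : 𝕜)).smul_const B).const_add 1) (by simp)
  simp only [id, one_smul] at h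
  exact h.unique (hasDerivAt_det_one_add_smul B)

theorem fderiv_det_apply_of_isUnit [CompleteSpace 𝕜] {A : E →L[𝕜] E} (hA : IsUnit A)
    (B : E →L[𝕜] E) :
    fderiv 𝕜 det A B = A.det * LinearMap.trace 𝕜 E (A.inverse ∘L B) := by
  obtain ⟨u, rfl⟩ := hA
  rw [← ringInverse_eq_inverse, Ring.inverse_unit]
  have hfactor : (det : (E →L[𝕜] E) → 𝕜) = fun X => (u : E →L[𝕜] E).det * det (↑u⁻¹ * X) := by
    funext X
    rw [← det_mul, ← mul_assoc, u.mul_inv, one_mul]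
  have h := ((differentiable_det _).hasFDerivAt.comp (u : E →L[𝕜] E)
    (compL 𝕜 E E E ↑u⁻¹).hasFDerivAt).const_mul (u : E →L[𝕜] E).det
  simp only [Function.comp_def, compL_apply, ← mul_def, u.inv_mul] at h
  conv_lhs => rw [hfactor]
  rw [h.fderiv]
  simp [fderiv_det_one_apply]

theorem trace_comp_comp_inverse {A : E →L[𝕜] E} (hA : IsUnit A) (B : E →L[𝕜] E) :
    LinearMap.trace 𝕜 E (((A ∘L B) ∘L A.inverse : E →L[𝕜] E) : E →ₗ[𝕜] E)
      = LinearMap.trace 𝕜 E (B : E →ₗ[𝕜] E) := by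
  obtain ⟨u, rfl⟩ := hA
  rw [← ringInverse_eq_inverse, Ring.inverse_unit, toLinearMap_comp, LinearMap.trace_comp_comm',
    ← toLinearMap_comp, ← comp_assoc, ← mul_def (↑u⁻¹ : E →L[𝕜] E), u.inv_mul, one_def, id_comp]

end ContinuousLinearMap

theorem fderiv_log_det_apply {X E : Type*} [NormedAddCommGroup X] [NormedSpace ℝ X]
    [NormedAddCommGroup E] [NormedSpace ℝ E] [FiniteDimensional ℝ E]
    {A : X → E →L[ℝ] E} {x : X} (hA : DifferentiableAt ℝ A x) (hAx : IsUnit (A x)) (v : X) :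
    fderiv ℝ (fun y => Real.log (A y).det) x v
      = LinearMap.trace ℝ E ((A x).inverse ∘L fderiv ℝ A x v : E →L[ℝ] E) := by
  have hdet : (A x).det ≠ 0 :=
    (LinearMap.isUnit_det _ (hAx.map ContinuousLinearMap.toLinearMapRingHom)).ne_zero
  have hdetA : HasFDerivAt (fun y => (A y).det)
      (fderiv ℝ ContinuousLinearMap.det (A x) ∘L fderiv ℝ A x) x :=
    (ContinuousLinearMap.differentiable_det (A x)).hasFDerivAt.comp x hA.hasFDerivAt
  rw [(hdetA.log hdet).fderiv]
  simp [ContinuousLinearMap.fderiv_det_apply_of_isUnit hAx, hdet]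

/-- For a C² map `φ` on an open set `U` whose Jacobian is invertible with
positive determinant, and a C¹ vector field `h`, one has
`trace( D[Dφ h](x) ∘ (Dφ x)⁻¹ ) = h(x) ⬝ ∇ log det Dφ(x) + div h(x)`. -/
theorem stmt_12 {d : ℕ} (U : Set (Euc d)) (hU : IsOpen U)
    (φ : Euc d → Euc d) (hφ : ContDiffOn ℝ 2 φ U)
    (hdet : ∀ x ∈ U, IsUnit (fderiv ℝ φ x) ∧ 0 < (fderiv ℝ φ x).det)
    (h : Euc d → Euc d) (hh : ContDiffOn ℝ 1 h U) :
    ∀ x ∈ U,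
      LinearMap.trace ℝ (Euc d)
        (((fderiv ℝ (fun y => fderiv ℝ φ y (h y)) x).comp
            (fderiv ℝ φ x).inverse : Euc d →L[ℝ] Euc d) : Euc d →ₗ[ℝ] Euc d)
        = ⟪h x, gradient (fun y => Real.log ((fderiv ℝ φ y).det)) x⟫ + divg h x := by
  intro x hx
  have hφx : ContDiffAt ℝ 2 φ x := hφ.contDiffAt (hU.mem_nhds hx)
  have hDφ : DifferentiableAt ℝ (fderiv ℝ φ) x :=
    (hφx.fderiv_right (m := 1) le_rfl).differentiableAt one_ne_zero
  have hhx : DifferentiableAt ℝ h x := (hh.contDiffAt (hU.mem_nhds hx)).differentiableAt one_ne_zero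
  have hsymm : (fderiv ℝ (fderiv ℝ φ) x).flip (h x) = fderiv ℝ (fderiv ℝ φ) x (h x) := by
    ext1 v
    exact hφx.isSymmSndFDerivAt (by simp) v (h x)
  rw [(hDφ.hasFDerivAt.clm_apply hhx.hasFDerivAt).fderiv, real_inner_comm, inner_gradient_left,
    fderiv_log_det_apply hDφ (hdet x hx).1, hsymm, ContinuousLinearMap.add_comp,
    ContinuousLinearMap.toLinearMap_add, map_add,
    ContinuousLinearMap.trace_comp_comp_inverse (hdet x hx).1,
    ContinuousLinearMap.toLinearMap_comp, LinearMap.trace_comp_comm', add_comm]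
  rfl
end
end
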